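/- arXiv:1308.6227 — 4 statements merged into one kernel-verified Lean document; each statement's English description precedes it below -/
import Mathlib

section
/- If f ∈ L²(ℝⁿ) and the Fourier transform of f is supported in [-π,π]ⁿ, then the sequence of samples (f(j))_{j∈ℤⁿ} is square-summable. -/
/-! The functions `ξ ↦ (2π)^(-n/2) e^(-i⟨j, ξ⟩)`, `j ∈ ℤⁿ`, are orthonormal in `L²([-π, π]ⁿ)`,
because `∫_{-π}^{π} e^(imx) dx` vanishes for every nonzero integer `m`. As `g` vanishes off the
cube, Fourier inversion writes `f j` as the inner product of this `j`-th exponential with `g`, so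
Bessel's inequality gives `∑ ‖f j‖² ≤ ‖g‖²_{L²([-π, π]ⁿ)} < ∞`. -/

open MeasureTheory Filter Real
open scoped RealInnerProductSpace

noncomputable section

/-- The embedding of the integer lattice `ℤⁿ` into `ℝⁿ`. -/
def lat (n : ℕ) (j : Fin n → ℤ) : EuclideanSpace ℝ (Fin n) := WithLp.toLp 2 (fun i => (j i : ℝ))

open Complex Set
open scoped ComplexConjugate InnerProductSpace

namespace PaleyWiener

theorem setIntegral_Icc_exp_int_mul (m : ℤ) :
    ∫ x in Icc (-π) π, exp (I * m * x) = if m = 0 then (2 * π : ℂ) else 0 := by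
  rw [integral_Icc_eq_integral_Ioc, ← intervalIntegral.integral_of_le (by linarith [pi_pos])]
  split_ifs with hm
  · simp [hm]
    ring
  · have hIm : I * m ≠ 0 := by simp [hm]
    rw [integral_exp_mul_complex hIm, div_eq_zero_iff, sub_eq_zero, exp_eq_exp_iff_exists_int]
    exact .inl ⟨m, by push_cast; ring⟩

def cube (n : ℕ) : Set (EuclideanSpace ℝ (Fin n)) :=
  WithLp.ofLp ⁻¹' univ.pi fun _ => Icc (-π) π

theorem mem_cube {n : ℕ} {ξ : EuclideanSpace ℝ (Fin n)} :
    ξ ∈ cube n ↔ ∀ i, |ξ i| ≤ π := by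
  simp only [cube, mem_preimage, mem_univ_pi, mem_Icc, abs_le]

theorem isCompact_cube (n : ℕ) : IsCompact (cube n) :=
  (PiLp.homeomorph 2 _).isCompact_preimage.2 (isCompact_univ_pi fun _ => isCompact_Icc)

instance (n : ℕ) : IsFiniteMeasure (volume.restrict (cube n)) :=
  isFiniteMeasure_restrict.2 (isCompact_cube n).measure_ne_top

theorem lat_sub (n : ℕ) (j k : Fin n → ℤ) : lat n (j - k) = lat n j - lat n k := by
  ext i
  simp [lat]

theorem inner_lat (n : ℕ) (m : Fin n → ℤ) (ξ : EuclideanSpace ℝ (Fin n)) :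
    ⟪lat n m, ξ⟫ = ∑ i, (m i : ℝ) * ξ i := by
  simp [lat, PiLp.inner_apply, mul_comm]

theorem setIntegral_cube_exp_inner_lat (n : ℕ) (m : Fin n → ℤ) :
    ∫ ξ in cube n, exp (I * ⟪lat n m, ξ⟫) = if m = 0 then (2 * π : ℂ) ^ n else 0 := by
  rw [← (PiLp.volume_preserving_toLp (Fin n)).setIntegral_preimage_emb
    (MeasurableEquiv.toLp 2 (Fin n → ℝ)).measurableEmbedding]
  change ∫ y in univ.pi _, _ = _
  simp only [inner_lat, ofReal_sum, ofReal_mul, ofReal_intCast, Finset.mul_sum, ← mul_assoc,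
    Complex.exp_sum, volume_pi, Measure.restrict_pi_pi]
  rw [integral_fintype_prod_eq_prod (f := fun i (x : ℝ) => exp (I * m i * x))]
  simp only [setIntegral_Icc_exp_int_mul, Fintype.prod_ite_zero, Finset.prod_const,
    Finset.card_univ, Fintype.card_fin, ← funext_iff]
  rfl

def fourierExp (n : ℕ) (j : Fin n → ℤ) (ξ : EuclideanSpace ℝ (Fin n)) : ℂ :=
  ((2 * π) ^ (-(n : ℝ) / 2) : ℝ) * exp (-(I * ⟪lat n j, ξ⟫))

theorem norm_fourierExp (n : ℕ) (j : Fin n → ℤ) (ξ : EuclideanSpace ℝ (Fin n)) :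
    ‖fourierExp n j ξ‖ = (2 * π) ^ (-(n : ℝ) / 2) := by
  simp [fourierExp, norm_exp, abs_of_pos (rpow_pos_of_pos two_pi_pos _)]

theorem continuous_fourierExp (n : ℕ) (j : Fin n → ℤ) : Continuous (fourierExp n j) := by
  unfold fourierExp
  fun_prop

theorem memLp_fourierExp (n : ℕ) (j : Fin n → ℤ) :
    MemLp (fourierExp n j) 2 (volume.restrict (cube n)) :=
  .of_bound (continuous_fourierExp n j).aestronglyMeasurable _
    (.of_forall fun ξ => (norm_fourierExp n j ξ).le)

theorem conj_fourierExp (n : ℕ) (j : Fin n → ℤ) (ξ : EuclideanSpace ℝ (Fin n)) :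
    conj (fourierExp n j ξ) = ((2 * π) ^ (-(n : ℝ) / 2) : ℝ) * exp (I * ⟪lat n j, ξ⟫) := by
  simp [fourierExp, ← exp_conj]

def fourierExpLp (n : ℕ) (j : Fin n → ℤ) : Lp ℂ 2 (volume.restrict (cube n)) :=
  (memLp_fourierExp n j).toLp

theorem inner_fourierExpLp_toLp (n : ℕ) (j : Fin n → ℤ) {F : EuclideanSpace ℝ (Fin n) → ℂ}
    (hF : MemLp F 2 (volume.restrict (cube n))) :
    ⟪fourierExpLp n j, hF.toLp F⟫_ℂ =
      ((2 * π) ^ (-(n : ℝ) / 2) : ℝ) * ∫ ξ in cube n, F ξ * exp (I * ⟪lat n j, ξ⟫) := by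
  rw [fourierExpLp, L2.inner_def, ← integral_const_mul]
  refine integral_congr_ae ?_
  filter_upwards [(memLp_fourierExp n j).coeFn_toLp, hF.coeFn_toLp] with ξ hφ hF
  rw [hφ, hF, RCLike.inner_apply, conj_fourierExp]
  ring

theorem orthonormal_fourierExpLp (n : ℕ) : Orthonormal ℂ (fourierExpLp n) := by
  rw [orthonormal_iff_ite]
  intro j k
  rw [fourierExpLp.eq_1 n k, inner_fourierExpLp_toLp]
  have hexp (ξ : EuclideanSpace ℝ (Fin n)) : fourierExp n k ξ * exp (I * ⟪lat n j, ξ⟫) =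
      ((2 * π) ^ (-(n : ℝ) / 2) : ℝ) * exp (I * ⟪lat n (j - k), ξ⟫) := by
    rw [fourierExp, lat_sub, inner_sub_left, ofReal_sub, mul_sub, sub_eq_add_neg, Complex.exp_add]
    ring
  have hnorm : (2 * π) ^ (-(n : ℝ) / 2) * ((2 * π) ^ (-(n : ℝ) / 2) * (2 * π) ^ n) = 1 := by
    rw [← mul_assoc, ← rpow_add two_pi_pos, ← rpow_natCast, ← rpow_add two_pi_pos]
    simp
  simp_rw [hexp, integral_const_mul, setIntegral_cube_exp_inner_lat, sub_eq_zero]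
  split_ifs
  · exact_mod_cast congrArg ((↑) : ℝ → ℂ) hnorm
  · simp

end PaleyWiener

open PaleyWiener

theorem stmt0_general (n : ℕ) (f g : EuclideanSpace ℝ (Fin n) → ℂ)
    (hg2 : MemLp g 2 volume)
    (hsupp : ∀ ξ : EuclideanSpace ℝ (Fin n), (∃ i, π < |ξ i|) → g ξ = 0)
    (hinv : ∀ x : EuclideanSpace ℝ (Fin n),
      f x = (((2 * π) ^ (-(n : ℝ) / 2) : ℝ) : ℂ) *
        ∫ ξ, g ξ * Complex.exp (Complex.I * (⟪x, ξ⟫ : ℝ))) :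
    Summable (fun j : Fin n → ℤ => ‖f (lat n j)‖ ^ 2) := by
  have hg : MemLp g 2 (volume.restrict (cube n)) := hg2.restrict _
  refine ((orthonormal_fourierExpLp n).inner_products_summable (x := hg.toLp g)).congr fun j => ?_
  have hg_cube (ξ) (hξ : ξ ∉ cube n) : g ξ * exp (I * ⟪lat n j, ξ⟫) = 0 := by
    rw [hsupp ξ (by simpa [mem_cube] using hξ), zero_mul]
  rw [inner_fourierExpLp_toLp, hinv, setIntegral_eq_integral_of_forall_compl_eq_zero hg_cube]

/-- If `f ∈ L²(ℝⁿ)` has Fourier transform `g` supported in `[-π,π]ⁿ`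
(so that `f` is the continuous representative given by Fourier inversion of `g`),
then the samples `(f j)_{j ∈ ℤⁿ}` are square-summable. -/
theorem stmt0 (n : ℕ) (f g : EuclideanSpace ℝ (Fin n) → ℂ)
    (hf2 : MemLp f 2 volume)
    (hg2 : MemLp g 2 volume)
    (hsupp : ∀ ξ : EuclideanSpace ℝ (Fin n), (∃ i, π < |ξ i|) → g ξ = 0)
    (hinv : ∀ x : EuclideanSpace ℝ (Fin n),
      f x = (((2 * π) ^ (-(n : ℝ) / 2) : ℝ) : ℂ) *
        ∫ ξ, g ξ * Complex.exp (Complex.I * (⟪x, ξ⟫ : ℝ))) :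
    Summable (fun j : Fin n → ℤ => ‖f (lat n j)‖ ^ 2) :=
  stmt0_general n f g hg2 hsupp hinv

end
end

section
/- For f ∈ PW_π (functions in L²(ℝⁿ) with Fourier transform supported in [-π,π]ⁿ), the Fourier transform satisfies (2π)^{n/2} f̂(ξ) = Σ_{j∈ℤⁿ} f(j) e^{-i j·ξ} for almost every ξ ∈ [-π,π]ⁿ, where the series converges in L²([-π,π]ⁿ). -/
/-!
Rescaling `ξ = 2π t` identifies `L²([-π,π]ⁿ)` with `L²` of the unit torus `ℝⁿ/ℤⁿ`, up to the
factor `(2π)ⁿ`, and turns `e^{-i j·ξ}` into the character of index `-j`. By the inversion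
formula and the support condition on `g`, the Fourier coefficients of `(2π)^{n/2} g` on the cube
are exactly the samples `f(j)`, so the claim is the `L²` convergence of the Fourier series of an
`L²` function on the torus.
-/

open MeasureTheory Filter Real
open scoped RealInnerProductSpace

noncomputable section

/-- The cube `[-π,π]ⁿ` in `ℝⁿ`. -/
def cube (n : ℕ) : Set (EuclideanSpace ℝ (Fin n)) := {ξ | ∀ i, |ξ i| ≤ π}

open Set

-- The probability measure on `ℝ/ℤ` for which Mathlib's multivariate Fourier basis is stated.
attribute [local instance] instMeasureSpaceUnitAddCircle
  instIsProbabilityMeasureUnitAddCircleVolume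

lemma lat_neg (n : ℕ) (j : Fin n → ℤ) : lat n (-j) = -lat n j := by
  ext i
  simp [lat]

lemma measurableSet_cube (n : ℕ) : MeasurableSet (cube n) := by
  simp only [cube, ofPred_forall]
  exact MeasurableSet.iInter fun i => measurableSet_le (by fun_prop) measurable_const

def ofTorus (n : ℕ) (x : UnitAddTorus (Fin n)) : EuclideanSpace ℝ (Fin n) :=
  WithLp.toLp 2 ((2 * π) • (UnitAddTorus.measurableEquivPiIoc (fun _ => -(1 / 2)) x : Fin n → ℝ))

lemma mFourier_eq_exp_inner_ofTorus {n : ℕ} (k : Fin n → ℤ) (x : UnitAddTorus (Fin n)) :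
    UnitAddTorus.mFourier k x = Complex.exp (Complex.I * (⟪lat n k, ofTorus n x⟫ : ℝ)) := by
  have hx : ∀ i, x i = ((AddCircle.equivIoc 1 (-(1 / 2)) (x i) : ℝ) : UnitAddCircle) :=
    fun i => AddCircle.coe_equivIoc.symm
  simp only [UnitAddTorus.mFourier, ContinuousMap.coe_mk, ofTorus, PiLp.inner_apply, lat,
    UnitAddTorus.coe_measurableEquivPiIoc_apply]
  conv_lhs => enter [2, i]; rw [hx i, fourier_coe_apply]
  rw [← Complex.exp_sum, Complex.ofReal_sum, Finset.mul_sum]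
  congr 1
  refine Finset.sum_congr rfl fun i _ => ?_
  simp only [Pi.smul_apply, smul_eq_mul, RCLike.inner_apply, conj_trivial]
  push_cast
  ring

lemma preimage_cube_ae_eq (n : ℕ) :
    (fun t : Fin n → ℝ => WithLp.toLp 2 ((2 * π) • t)) ⁻¹' cube n
      =ᵐ[volume] {t | ∀ i, t i ∈ Ioc (-(1 / 2)) (-(1 / 2) + 1)} := by
  have h_pre : (fun t : Fin n → ℝ => WithLp.toLp 2 ((2 * π) • t)) ⁻¹' cube n
      = univ.pi fun _ => Icc (-(1 / 2)) (1 / 2) := by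
    ext t
    simp only [cube, mem_preimage, Set.mem_pi, mem_univ, true_implies, mem_Icc]
    refine forall_congr' fun i => ?_
    rw [PiLp.toLp_apply, Pi.smul_apply, smul_eq_mul, abs_le,
      ← le_div_iff₀' (by positivity), ← div_le_iff₀' (by positivity)]
    field_simp
  have h_box : {t : Fin n → ℝ | ∀ i, t i ∈ Ioc (-(1 / 2)) (-(1 / 2) + 1)}
      = univ.pi fun _ => Ioc (-(1 / 2)) (1 / 2) := by
    rw [show -(1 / 2 : ℝ) + 1 = 1 / 2 by norm_num]
    ext t
    simp
  rw [h_pre, h_box, volume_pi]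
  exact Measure.pi_Ioc_ae_eq_pi_Icc.symm

lemma measurePreserving_ofTorus (n : ℕ) :
    MeasurePreserving (ofTorus n) volume
      (ENNReal.ofReal ((2 * π) ^ n)⁻¹ • volume.restrict (cube n)) := by
  set box : Set (Fin n → ℝ) := {t | ∀ i, t i ∈ Ioc (-(1 / 2)) (-(1 / 2) + 1)}
  have h_box : MeasurableSet box := MeasurableSet.univ_pi' fun _ => measurableSet_Ioc
  have h_equiv := UnitAddTorus.measurePreserving_equivPiIoc (fun _ : Fin n => -(1 / 2))
  have h_val : MeasurePreserving (Subtype.val : box → Fin n → ℝ)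
      (Measure.comap Subtype.val volume) (volume.restrict box) :=
    ⟨measurable_subtype_coe, map_comap_subtype_coe h_box volume⟩
  have h_scale : MeasurePreserving (fun t : Fin n → ℝ => WithLp.toLp 2 ((2 * π) • t))
      volume (ENNReal.ofReal ((2 * π) ^ n)⁻¹ • volume) := by
    refine (PiLp.volume_preserving_toLp (Fin n)).smul_measure _ |>.comp ⟨by fun_prop, ?_⟩
    rw [Measure.map_addHaar_smul _ (by positivity), Module.finrank_fin_fun,
      abs_of_pos (by positivity)]
  have h_restrict := h_scale.restrict_preimage (measurableSet_cube n)
  rw [Measure.restrict_smul, Measure.restrict_congr_set (preimage_cube_ae_eq n)] at h_restrict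
  exact h_restrict.comp (h_val.comp h_equiv)

lemma integral_comp_ofTorus {n : ℕ} {E : Type*} [NormedAddCommGroup E] [NormedSpace ℝ E]
    {F : EuclideanSpace ℝ (Fin n) → E} (hF : AEStronglyMeasurable F (volume.restrict (cube n))) :
    ∫ x, F (ofTorus n x) = ((2 * π) ^ n)⁻¹ • ∫ ξ in cube n, F ξ := by
  have h_map := (measurePreserving_ofTorus n).map_eq
  rw [← integral_map (measurePreserving_ofTorus n).aemeasurable (h_map ▸ hF.smul_measure _),
    h_map, integral_smul_measure, ENNReal.toReal_ofReal (by positivity)]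

lemma memLp_comp_ofTorus {n : ℕ} {E : Type*} [NormedAddCommGroup E] {p : ENNReal}
    {F : EuclideanSpace ℝ (Fin n) → E} (hF : MemLp F p (volume.restrict (cube n))) :
    MemLp (F ∘ ofTorus n) p volume :=
  (hF.smul_measure ENNReal.ofReal_ne_top).comp_measurePreserving (measurePreserving_ofTorus n)

lemma MeasureTheory.L2.norm_sq_eq_integral_norm_sq {α E : Type*} [MeasurableSpace α]
    {μ : Measure α} [NormedAddCommGroup E] [InnerProductSpace ℝ E] (F : Lp E 2 μ) :
    ‖F‖ ^ 2 = ∫ a, ‖F a‖ ^ 2 ∂μ := by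
  simp_rw [← real_inner_self_eq_norm_sq, L2.inner_def]

def cubeFourierCoeff (n : ℕ) (h : EuclideanSpace ℝ (Fin n) → ℂ) (j : Fin n → ℤ) : ℂ :=
  ((2 * π) ^ n)⁻¹ • ∫ ξ in cube n, Complex.exp (Complex.I * (⟪lat n j, ξ⟫ : ℝ)) * h ξ

lemma mFourierCoeff_neg_toLp_comp_ofTorus {n : ℕ} {h : EuclideanSpace ℝ (Fin n) → ℂ}
    (hh : MemLp h 2 (volume.restrict (cube n))) (j : Fin n → ℤ) :
    UnitAddTorus.mFourierCoeff (MemLp.toLp _ (memLp_comp_ofTorus hh)) (-j)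
      = cubeFourierCoeff n h j := by
  have h_ae : ∀ᵐ x, UnitAddTorus.mFourier (-(-j)) x • MemLp.toLp _ (memLp_comp_ofTorus hh) x
      = Complex.exp (Complex.I * (⟪lat n j, ofTorus n x⟫ : ℝ)) * h (ofTorus n x) := by
    filter_upwards [(memLp_comp_ofTorus hh).coeFn_toLp] with x hx
    rw [hx, neg_neg, mFourier_eq_exp_inner_ofTorus, smul_eq_mul, Function.comp_apply]
  rw [UnitAddTorus.mFourierCoeff, integral_congr_ae h_ae, cubeFourierCoeff]
  exact integral_comp_ofTorus (F := fun ξ => Complex.exp (Complex.I * (⟪lat n j, ξ⟫ : ℝ)) * h ξ)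
    ((Continuous.aestronglyMeasurable (by fun_prop)).mul hh.1)

lemma setIntegral_cube_norm_sub_sum_sq {n : ℕ} {h : EuclideanSpace ℝ (Fin n) → ℂ}
    (hh : MemLp h 2 (volume.restrict (cube n))) (a : (Fin n → ℤ) → ℂ) (s : Finset (Fin n → ℤ)) :
    ∫ ξ in cube n, ‖h ξ - ∑ j ∈ s, a j * Complex.exp (-Complex.I * (⟪lat n j, ξ⟫ : ℝ))‖ ^ 2
      = (2 * π) ^ n * ‖MemLp.toLp _ (memLp_comp_ofTorus hh)
          - ∑ j ∈ s, a j • UnitAddTorus.mFourierLp 2 (-j)‖ ^ 2 := by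
  have h_partial : ∑ j ∈ s, a j • UnitAddTorus.mFourierLp 2 (-j)
      = ContinuousMap.toLp 2 volume ℂ (∑ j ∈ s, a j • UnitAddTorus.mFourier (-j)) := by
    simp only [map_sum, map_smul]
  have h_ae : ∀ᵐ x, ‖(MemLp.toLp _ (memLp_comp_ofTorus hh)
        - ∑ j ∈ s, a j • UnitAddTorus.mFourierLp 2 (-j)) x‖ ^ 2
      = ‖h (ofTorus n x)
          - ∑ j ∈ s, a j * Complex.exp (-Complex.I * (⟪lat n j, ofTorus n x⟫ : ℝ))‖ ^ 2 := by
    rw [h_partial]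
    filter_upwards [Lp.coeFn_sub (MemLp.toLp _ (memLp_comp_ofTorus hh)) _,
      (memLp_comp_ofTorus hh).coeFn_toLp,
      ContinuousMap.coeFn_toLp (𝕜 := ℂ) (p := 2) volume
        (∑ j ∈ s, a j • UnitAddTorus.mFourier (-j))] with x h_sub h_G h_sum
    rw [h_sub, Pi.sub_apply, h_G, h_sum, Function.comp_apply, ContinuousMap.sum_apply]
    simp only [ContinuousMap.smul_apply, smul_eq_mul, mFourier_eq_exp_inner_ofTorus, lat_neg,
      inner_neg_left, Complex.ofReal_neg, mul_neg, neg_mul]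
  rw [L2.norm_sq_eq_integral_norm_sq, integral_congr_ae h_ae,
    integral_comp_ofTorus (F := fun ξ =>
      ‖h ξ - ∑ j ∈ s, a j * Complex.exp (-Complex.I * (⟪lat n j, ξ⟫ : ℝ))‖ ^ 2),
    smul_eq_mul, ← mul_assoc, mul_inv_cancel₀ (by positivity), one_mul]
  exact ((hh.1.sub (Continuous.aestronglyMeasurable (by fun_prop))).norm).pow 2

theorem tendsto_setIntegral_cube_norm_sub_fourierSum_sq {n : ℕ}
    {h : EuclideanSpace ℝ (Fin n) → ℂ} (hh : MemLp h 2 (volume.restrict (cube n))) :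
    Tendsto (fun s : Finset (Fin n → ℤ) => ∫ ξ in cube n,
        ‖h ξ - ∑ j ∈ s, cubeFourierCoeff n h j * Complex.exp (-Complex.I * (⟪lat n j, ξ⟫ : ℝ))‖ ^ 2)
      atTop (nhds 0) := by
  set G := MemLp.toLp _ (memLp_comp_ofTorus hh)
  have h_sum : HasSum (fun j => cubeFourierCoeff n h j • UnitAddTorus.mFourierLp 2 (-j)) G := by
    refine (Equiv.neg (Fin n → ℤ)).hasSum_iff.mp ?_
    convert UnitAddTorus.hasSum_mFourier_series_L2 G using 2 with k
    simp only [Function.comp_apply, Equiv.neg_apply, ← mFourierCoeff_neg_toLp_comp_ofTorus hh,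
      neg_neg]
    rfl
  have h_lim : Tendsto (fun s : Finset (Fin n → ℤ) =>
      ‖G - ∑ j ∈ s, cubeFourierCoeff n h j • UnitAddTorus.mFourierLp 2 (-j)‖) atTop (nhds 0) := by
    simpa only [norm_sub_rev, SummationFilter.unconditional_filter] using
      tendsto_iff_norm_sub_tendsto_zero.mp h_sum
  have h_lim_sq := (h_lim.pow 2).const_mul ((2 * π) ^ n)
  rw [zero_pow two_ne_zero, mul_zero] at h_lim_sq
  simpa only [setIntegral_cube_norm_sub_sum_sq hh] using h_lim_sq

lemma inv_pow_mul_rpow_div_two {x : ℝ} (hx : 0 < x) (n : ℕ) :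
    (x ^ n)⁻¹ * x ^ ((n : ℝ) / 2) = x ^ (-(n : ℝ) / 2) := by
  rw [← Real.rpow_natCast, ← Real.rpow_neg hx.le, ← Real.rpow_add hx]
  ring_nf

theorem stmt1_general (n : ℕ) (f g : EuclideanSpace ℝ (Fin n) → ℂ)
    (hg2 : MemLp g 2 volume)
    (hsupp : ∀ ξ : EuclideanSpace ℝ (Fin n), (∃ i, π < |ξ i|) → g ξ = 0)
    (hinv : ∀ x : EuclideanSpace ℝ (Fin n),
      f x = (((2 * π) ^ (-(n : ℝ) / 2) : ℝ) : ℂ) *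
        ∫ ξ, g ξ * Complex.exp (Complex.I * (⟪x, ξ⟫ : ℝ))) :
    Tendsto (fun s : Finset (Fin n → ℤ) =>
        ∫ ξ in cube n, ‖(((2 * π) ^ ((n : ℝ) / 2) : ℝ) : ℂ) * g ξ -
          ∑ j ∈ s, f (lat n j) * Complex.exp (-Complex.I * (⟪lat n j, ξ⟫ : ℝ))‖ ^ 2)
      atTop (nhds 0) := by
  set C : ℂ := (((2 * π) ^ ((n : ℝ) / 2) : ℝ) : ℂ)
  have h_coeff : ∀ j, cubeFourierCoeff n (fun ξ => C * g ξ) j = f (lat n j) := by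
    intro j
    have h_cube : ∫ ξ in cube n, g ξ * Complex.exp (Complex.I * (⟪lat n j, ξ⟫ : ℝ))
        = ∫ ξ, g ξ * Complex.exp (Complex.I * (⟪lat n j, ξ⟫ : ℝ)) := by
      refine setIntegral_eq_integral_of_forall_compl_eq_zero fun ξ hξ => ?_
      rw [hsupp ξ (by simpa [cube] using hξ), zero_mul]
    rw [cubeFourierCoeff, hinv, ← h_cube, ← inv_pow_mul_rpow_div_two (by positivity),
      ← integral_const_mul, Complex.real_smul, ← integral_const_mul]
    push_cast
    congr 1 with ξ
    ring
  simpa only [h_coeff] using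
    tendsto_setIntegral_cube_norm_sub_fourierSum_sq ((hg2.restrict _).const_mul C)

/-- For `f ∈ PW_π` with Fourier transform `g` supported in `[-π,π]ⁿ`, the series
`Σ_j f(j) e^{-i j·ξ}` converges in `L²([-π,π]ⁿ)` to `(2π)^{n/2} g(ξ)`; in particular
`(2π)^{n/2} ĝ(ξ) = Σ_j f(j) e^{-ij·ξ}` a.e. on the cube, in the `L²` sense. -/
theorem stmt1 (n : ℕ) (f g : EuclideanSpace ℝ (Fin n) → ℂ)
    (hf2 : MemLp f 2 volume)
    (hg2 : MemLp g 2 volume)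
    (hsupp : ∀ ξ : EuclideanSpace ℝ (Fin n), (∃ i, π < |ξ i|) → g ξ = 0)
    (hinv : ∀ x : EuclideanSpace ℝ (Fin n),
      f x = (((2 * π) ^ (-(n : ℝ) / 2) : ℝ) : ℂ) *
        ∫ ξ, g ξ * Complex.exp (Complex.I * (⟪x, ξ⟫ : ℝ))) :
    Tendsto (fun s : Finset (Fin n → ℤ) =>
        ∫ ξ in cube n, ‖(((2 * π) ^ ((n : ℝ) / 2) : ℝ) : ℂ) * g ξ -
          ∑ j ∈ s, f (lat n j) * Complex.exp (-Complex.I * (⟪lat n j, ξ⟫ : ℝ))‖ ^ 2)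
      atTop (nhds 0) :=
  stmt1_general n f g hg2 hsupp hinv

end
end

section
/- Let L : ℝⁿ → ℂ be measurable with |L(x)| ≤ C/(1 + ‖x‖^{n+1}) for all x. Then for 1 ≤ p ≤ ∞ and any (c_j)_{j∈ℤⁿ} ∈ ℓᵖ(ℤⁿ), the function I(x) = Σ_{j∈ℤⁿ} c_j L(x - j) belongs to Lᵖ(ℝⁿ), and there exists a constant C_p independent of (c_j) with ‖I‖_{Lᵖ(ℝⁿ)} ≤ C_p ‖(c_j)‖_{ℓᵖ(ℤⁿ)}. -/
/-!
Write `w(x) = (1 + ‖x‖)^{-(n+1)}`; the hypothesis gives `|L(x)| ≲ w(x)`. The kernel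
`K(x, j) = |L(x - j)|` then satisfies the two Schur conditions
`sup_x ∑_j K(x, j) < ∞` and `sup_j ∫ K(x, j) dx < ∞`. The second is translation invariance and
the integrability of `w` (as `n + 1 > n`). For the first, Peetre's inequality
`1 + ‖a + b‖ ≤ (1 + ‖a‖)(1 + ‖b‖)` compares `w(x - j)` with `w(k - j)` for the lattice point `k`
nearest to `x`, and `∑_{m ∈ ℤⁿ} w(m) ≤ (∑_{k ∈ ℤ} (1 + |k|)^{-(n+1)/n})^n` is finite.
Schur's test then bounds `c ↦ ∑_j c_j K(·, j)` from `ℓᵖ` to `Lᵖ`: the case `p = ∞` is the first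
condition, and for `p < ∞` the weighted Hölder inequality
`(∑_j c_j K(x, j))^p ≤ (∑_j K(x, j))^{p-1} ∑_j c_j^p K(x, j)` is integrated using the second.
-/

open MeasureTheory Filter Real

noncomputable section

open scoped ENNReal

section SchurTest

variable {ι : Type*}

theorem ENNReal.tsum_mul_le_weight_mul_Lp {p : ℝ} (hp : 1 ≤ p) (w f : ι → ℝ≥0∞) :
    ∑' i, w i * f i ≤ (∑' i, w i) ^ (1 - p⁻¹) * (∑' i, w i * f i ^ p) ^ p⁻¹ := by
  rw [ENNReal.tsum_eq_iSup_sum]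
  refine iSup_le fun s => (ENNReal.inner_le_weight_mul_Lp_of_nonneg s hp w f).trans ?_
  gcongr
  · exact sub_nonneg.2 (inv_le_one_of_one_le₀ hp)
  · exact ENNReal.sum_le_tsum s
  · exact ENNReal.sum_le_tsum s

theorem ENNReal.tsum_mul_rpow_le {p : ℝ} (hp : 1 ≤ p) (w f : ι → ℝ≥0∞) :
    (∑' i, w i * f i) ^ p ≤ (∑' i, w i) ^ (p - 1) * ∑' i, w i * f i ^ p := by
  have hp₀ : 0 < p := by positivity
  calc (∑' i, w i * f i) ^ p
      ≤ ((∑' i, w i) ^ (1 - p⁻¹) * (∑' i, w i * f i ^ p) ^ p⁻¹) ^ p := by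
        gcongr
        exact ENNReal.tsum_mul_le_weight_mul_Lp hp w f
    _ = (∑' i, w i) ^ (p - 1) * ∑' i, w i * f i ^ p := by
        rw [ENNReal.mul_rpow_of_nonneg _ _ hp₀.le, ← ENNReal.rpow_mul, ← ENNReal.rpow_mul,
          inv_mul_cancel₀ hp₀.ne', ENNReal.rpow_one, sub_mul, one_mul, inv_mul_cancel₀ hp₀.ne']

theorem lp.enorm_apply_le {E : ι → Type*} [∀ i, NormedAddCommGroup (E i)] {p : ℝ≥0∞}
    (hp : p ≠ 0) (f : lp E p) (i : ι) : ‖f i‖ₑ ≤ ENNReal.ofReal ‖f‖ := by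
  rw [← ofReal_norm]
  exact ENNReal.ofReal_le_ofReal (lp.norm_apply_le_norm hp f i)

theorem lp.tsum_enorm_rpow_eq {E : ι → Type*} [∀ i, NormedAddCommGroup (E i)] {p : ℝ≥0∞}
    (hp : 0 < p.toReal) (f : lp E p) :
    ∑' i, ‖f i‖ₑ ^ p.toReal = ENNReal.ofReal ‖f‖ ^ p.toReal := by
  calc ∑' i, ‖f i‖ₑ ^ p.toReal = ∑' i, ENNReal.ofReal (‖f i‖ ^ p.toReal) := by
        simp_rw [← ofReal_norm, ENNReal.ofReal_rpow_of_nonneg (norm_nonneg _) hp.le]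
    _ = ENNReal.ofReal ‖f‖ ^ p.toReal := by
        rw [← ENNReal.ofReal_tsum_of_nonneg (fun i => by positivity) ((lp.memℓp f).summable hp),
          ← lp.norm_rpow_eq_tsum hp]
        exact (ENNReal.ofReal_rpow_of_nonneg (lp.norm_nonneg' f) hp.le).symm

variable {𝕜 E : Type*} [NormedField 𝕜] [NormedAddCommGroup E] [NormedSpace 𝕜 E]

theorem enorm_tsum_smul_le {α : Type*} (c : ι → 𝕜) (g : ι → α → E) (x : α) :
    ‖∑' i, c i • g i x‖ₑ ≤ ∑' i, ‖c i‖ₑ * ‖g i x‖ₑ := by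
  simpa only [enorm_smul] using enorm_tsum_le_tsum_enorm (f := fun i => c i • g i x)

variable [Countable ι] {α : Type*} [MeasurableSpace α] {μ : Measure α}

theorem lintegral_tsum_mul_rpow_le {K : ι → α → ℝ≥0∞} (hK : ∀ i, AEMeasurable (K i) μ)
    {A B : ℝ≥0∞} (hA : ∀ x, ∑' i, K i x ≤ A) (hB : ∀ i, ∫⁻ x, K i x ∂μ ≤ B)
    (a : ι → ℝ≥0∞) {p : ℝ} (hp : 1 ≤ p) :
    ∫⁻ x, (∑' i, a i * K i x) ^ p ∂μ ≤ A ^ (p - 1) * B * ∑' i, a i ^ p := by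
  calc ∫⁻ x, (∑' i, a i * K i x) ^ p ∂μ
      ≤ ∫⁻ x, A ^ (p - 1) * ∑' i, K i x * a i ^ p ∂μ := by
        refine lintegral_mono fun x => ?_
        simp_rw [mul_comm (a _)]
        exact (ENNReal.tsum_mul_rpow_le hp _ _).trans (by gcongr; exact hA x)
    _ = A ^ (p - 1) * ∑' i, (∫⁻ x, K i x ∂μ) * a i ^ p := by
        rw [lintegral_const_mul'' _ (AEMeasurable.tsum fun i => (hK i).mul_const _),
          lintegral_tsum fun i => (hK i).mul_const _]
        simp_rw [lintegral_mul_const'' _ (hK _)]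
    _ ≤ A ^ (p - 1) * ∑' i, B * a i ^ p := by gcongr with i; exact hB i
    _ = A ^ (p - 1) * B * ∑' i, a i ^ p := by rw [ENNReal.tsum_mul_left, mul_assoc]

/-- For `p = ∞` the exponents are `1` and `0`, since `(∞ : ℝ≥0∞).toReal = 0`. -/
def schurConst (p A B : ℝ≥0∞) : ℝ≥0∞ := A ^ (1 - p.toReal⁻¹) * B ^ p.toReal⁻¹

theorem schurConst_ne_top {p A B : ℝ≥0∞} (hp : 1 ≤ p) (hA : A ≠ ∞) (hB : B ≠ ∞) :
    schurConst p A B ≠ ∞ := by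
  have hp' : p.toReal⁻¹ ≤ 1 := by
    rw [← ENNReal.toReal_inv]
    exact ENNReal.toReal_le_of_le_ofReal zero_le_one (by simpa using ENNReal.inv_le_one.2 hp)
  exact ENNReal.mul_ne_top (ENNReal.rpow_ne_top_of_nonneg (by linarith) hA)
    (ENNReal.rpow_ne_top_of_nonneg (by positivity) hB)

variable {p : ℝ≥0∞} {g : ι → α → E} {A B : ℝ≥0∞}

theorem eLpNorm_tsum_smul_le (hp : 1 ≤ p) (hg : ∀ i, AEStronglyMeasurable (g i) μ)
    (hA : ∀ x, ∑' i, ‖g i x‖ₑ ≤ A) (hB : ∀ i, ∫⁻ x, ‖g i x‖ₑ ∂μ ≤ B)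
    (c : lp (fun _ : ι => 𝕜) p) :
    eLpNorm (fun x => ∑' i, c i • g i x) p μ ≤
      schurConst p A B * ENNReal.ofReal ‖c‖ := by
  have hp₀ : p ≠ 0 := (zero_lt_one.trans_le hp).ne'
  rcases eq_or_ne p ∞ with rfl | hp_top
  · simp only [schurConst, ENNReal.toReal_top, inv_zero, sub_zero, ENNReal.rpow_one,
      ENNReal.rpow_zero, mul_one, eLpNorm_exponent_top]
    refine eLpNormEssSup_le_of_ae_enorm_bound (ae_of_all _ fun x => ?_)
    calc ‖∑' i, c i • g i x‖ₑ ≤ ∑' i, ‖c i‖ₑ * ‖g i x‖ₑ := enorm_tsum_smul_le _ g x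
      _ ≤ ∑' i, ENNReal.ofReal ‖c‖ * ‖g i x‖ₑ := by gcongr with i; exact lp.enorm_apply_le hp₀ c i
      _ ≤ A * ENNReal.ofReal ‖c‖ := by rw [ENNReal.tsum_mul_left, mul_comm]; gcongr; exact hA x
  have hq : 1 ≤ p.toReal := by simpa using ENNReal.toReal_mono hp_top hp
  have hq₀ : 0 < p.toReal := by positivity
  rw [eLpNorm_eq_lintegral_rpow_enorm_toReal hp₀ hp_top]
  calc (∫⁻ x, ‖∑' i, c i • g i x‖ₑ ^ p.toReal ∂μ) ^ (1 / p.toReal)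
      ≤ (∫⁻ x, (∑' i, ‖c i‖ₑ * ‖g i x‖ₑ) ^ p.toReal ∂μ) ^ (1 / p.toReal) := by
        gcongr with x; exact enorm_tsum_smul_le _ g x
    _ ≤ (A ^ (p.toReal - 1) * B * ∑' i, ‖c i‖ₑ ^ p.toReal) ^ (1 / p.toReal) := by
        gcongr
        exact lintegral_tsum_mul_rpow_le (fun i => (hg i).enorm) hA hB _ hq
    _ = schurConst p A B * ENNReal.ofReal ‖c‖ := by
        rw [schurConst, lp.tsum_enorm_rpow_eq hq₀, one_div,
          ENNReal.mul_rpow_of_nonneg _ _ (by positivity),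
          ENNReal.mul_rpow_of_nonneg _ _ (by positivity), ← ENNReal.rpow_mul, ← ENNReal.rpow_mul,
          sub_mul, one_mul, mul_inv_cancel₀ hq₀.ne', ENNReal.rpow_one]

theorem aestronglyMeasurable_tsum_smul [CompleteSpace E] (hp : 1 ≤ p)
    (hg : ∀ i, AEStronglyMeasurable (g i) μ) (hA_top : A ≠ ∞) (hA : ∀ x, ∑' i, ‖g i x‖ₑ ≤ A)
    (c : lp (fun _ : ι => 𝕜) p) :
    AEStronglyMeasurable (fun x => ∑' i, c i • g i x) μ := by
  have hp₀ : p ≠ 0 := (zero_lt_one.trans_le hp).ne'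
  have hsum : ∀ x, Summable fun i => c i • g i x := fun x => by
    refine .of_norm (tsum_enorm_ne_top_iff_summable_norm.1 (ne_top_of_le_ne_top
      (b := ENNReal.ofReal ‖c‖ * A) (ENNReal.mul_ne_top ENNReal.ofReal_ne_top hA_top) ?_))
    calc ∑' i, ‖c i • g i x‖ₑ = ∑' i, ‖c i‖ₑ * ‖g i x‖ₑ := by simp only [enorm_smul]
      _ ≤ ∑' i, ENNReal.ofReal ‖c‖ * ‖g i x‖ₑ := by gcongr with i; exact lp.enorm_apply_le hp₀ c i
      _ ≤ ENNReal.ofReal ‖c‖ * A := by rw [ENNReal.tsum_mul_left]; gcongr; exact hA x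
  exact aestronglyMeasurable_of_tendsto_ae atTop
    (fun s => Finset.aestronglyMeasurable_fun_sum s fun i _ => (hg i).const_smul (c i))
    (ae_of_all _ fun x => (hsum x).hasSum)

theorem memLp_tsum_smul [CompleteSpace E] (hp : 1 ≤ p) (hg : ∀ i, AEStronglyMeasurable (g i) μ)
    (hA_top : A ≠ ∞) (hB_top : B ≠ ∞) (hA : ∀ x, ∑' i, ‖g i x‖ₑ ≤ A)
    (hB : ∀ i, ∫⁻ x, ‖g i x‖ₑ ∂μ ≤ B) (c : lp (fun _ : ι => 𝕜) p) :
    MemLp (fun x => ∑' i, c i • g i x) p μ :=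
  ⟨aestronglyMeasurable_tsum_smul hp hg hA_top hA c, (eLpNorm_tsum_smul_le hp hg hA hB c).trans_lt
    (ENNReal.mul_lt_top (schurConst_ne_top hp hA_top hB_top).lt_top ENNReal.ofReal_lt_top)⟩

end SchurTest

theorem one_add_norm_add_le_mul {E : Type*} [SeminormedAddCommGroup E] (x y : E) :
    1 + ‖x + y‖ ≤ (1 + ‖x‖) * (1 + ‖y‖) := by
  nlinarith [norm_add_le x y, mul_nonneg (norm_nonneg x) (norm_nonneg y)]

theorem one_add_norm_rpow_neg_le {E : Type*} [SeminormedAddCommGroup E] {r : ℝ} (hr : 0 ≤ r)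
    (x y : E) : (1 + ‖x‖) ^ (-r) ≤ (1 + ‖y‖) ^ r * (1 + ‖x + y‖) ^ (-r) := by
  have h : (1 + ‖x + y‖) ^ r ≤ (1 + ‖y‖) ^ r * (1 + ‖x‖) ^ r := by
    rw [← Real.mul_rpow (by positivity) (by positivity), mul_comm]
    exact Real.rpow_le_rpow (by positivity) (one_add_norm_add_le_mul x y) hr
  rw [Real.rpow_neg (by positivity), Real.rpow_neg (by positivity), ← div_eq_mul_inv,
    inv_eq_one_div, div_le_div_iff₀ (by positivity) (by positivity), one_mul]
  exact h

theorem inv_one_add_pow_le {t : ℝ} (ht : 0 ≤ t) (m : ℕ) :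
    (1 + t ^ m)⁻¹ ≤ 2 ^ (m - 1) * (1 + t) ^ (-(m : ℝ)) := by
  rw [Real.rpow_neg (by positivity), Real.rpow_natCast, ← div_eq_mul_inv, inv_eq_one_div,
    div_le_div_iff₀ (by positivity) (by positivity), one_mul]
  simpa using add_pow_le zero_le_one ht m

theorem enorm_le_of_norm_le_div_one_add_norm_pow {E F : Type*} [SeminormedAddCommGroup E]
    [SeminormedAddCommGroup F] {f : E → F} {C : ℝ} {m : ℕ}
    (hf : ∀ x, ‖f x‖ ≤ C / (1 + ‖x‖ ^ m)) (x : E) :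
    ‖f x‖ₑ ≤ ENNReal.ofReal (2 ^ (m - 1) * C) * ENNReal.ofReal ((1 + ‖x‖) ^ (-(m : ℝ))) := by
  have hC : 0 ≤ C := by
    simpa using (le_div_iff₀ (by positivity)).1 ((norm_nonneg _).trans (hf 0))
  rw [← ofReal_norm, ← ENNReal.ofReal_mul (by positivity)]
  refine ENNReal.ofReal_le_ofReal ((hf x).trans ?_)
  calc C / (1 + ‖x‖ ^ m) = C * (1 + ‖x‖ ^ m)⁻¹ := div_eq_mul_inv _ _
    _ ≤ C * (2 ^ (m - 1) * (1 + ‖x‖) ^ (-(m : ℝ))) := by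
        gcongr; exact inv_one_add_pow_le (norm_nonneg x) m
    _ = 2 ^ (m - 1) * C * (1 + ‖x‖) ^ (-(m : ℝ)) := by ring

theorem lintegral_enorm_comp_sub_le {G F : Type*} [MeasurableSpace G] [AddGroup G]
    [MeasurableAdd G] {μ : Measure G} [μ.IsAddRightInvariant] [ENorm F] {f : G → F}
    {w : G → ℝ≥0∞} (hw : Measurable w) {K : ℝ≥0∞} (hf : ∀ x, ‖f x‖ₑ ≤ K * w x) (v : G) :
    ∫⁻ x, ‖f (x - v)‖ₑ ∂μ ≤ K * ∫⁻ x, w x ∂μ := by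
  rw [lintegral_sub_right_eq_self (fun x => ‖f x‖ₑ) v, ← lintegral_const_mul K hw]
  exact lintegral_mono hf

section Lattice

variable {n : ℕ}

theorem ENNReal.tsum_pi_fin_prod_eq_pow {β : Type*} (f : β → ℝ≥0∞) :
    ∀ n : ℕ, ∑' m : Fin n → β, ∏ i, f (m i) = (∑' b, f b) ^ n
  | 0 => by simp
  | n + 1 => by
    rw [← (Fin.consEquiv fun _ => β).tsum_eq, ENNReal.tsum_prod', pow_succ',
      ← ENNReal.tsum_pi_fin_prod_eq_pow f n, ← ENNReal.tsum_mul_right]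
    simp only [Fin.consEquiv_apply, Fin.prod_univ_succ, Fin.cons_zero, Fin.cons_succ,
      ENNReal.tsum_mul_left]

theorem summable_one_add_abs_int_rpow_neg {s : ℝ} (hs : 1 < s) :
    Summable fun k : ℤ => (1 + |(k : ℝ)|) ^ (-s) := by
  have h := (Real.summable_one_div_nat_add_rpow 1 s).2 hs
  have hnat : ∀ k : ℕ, (1 + |(k : ℝ)|) ^ (-s) = 1 / |(k : ℝ) + 1| ^ s := fun k => by
    rw [Real.rpow_neg (by positivity), one_div, abs_of_nonneg (k.cast_nonneg : (0:ℝ) ≤ k),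
      abs_of_nonneg (by positivity : (0:ℝ) ≤ k + 1), add_comm]
  rw [summable_int_iff_summable_nat_and_neg]
  constructor
  · simpa only [Int.cast_natCast, hnat] using h
  · simpa only [Int.cast_neg, Int.cast_natCast, abs_neg, hnat] using h

theorem lat_sub (j k : Fin n → ℤ) : lat n (j - k) = lat n j - lat n k := by
  ext i
  simp [lat]

theorem norm_lat_round_sub_le (x : EuclideanSpace ℝ (Fin n)) :
    ‖lat n (fun i => round (x i)) - x‖ ≤ √n := by
  rw [EuclideanSpace.norm_eq]
  gcongr
  calc ∑ i, ‖(lat n (fun i => round (x i)) - x) i‖ ^ 2 ≤ ∑ _i : Fin n, (1 : ℝ) := by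
        gcongr with i
        rw [Real.norm_eq_abs]
        refine pow_le_one₀ (abs_nonneg _) ?_
        exact (abs_sub_comm _ _).trans_le (abs_sub_round (x i)) |>.trans (by norm_num)
    _ = n := by simp

theorem one_add_norm_lat_rpow_le_prod {s : ℝ} (hs : 0 ≤ s) (m : Fin n → ℤ) :
    (1 + ‖lat n m‖) ^ (-(n * s)) ≤ ∏ i, (1 + |(m i : ℝ)|) ^ (-s) := by
  calc (1 + ‖lat n m‖) ^ (-(n * s)) = ∏ _i : Fin n, (1 + ‖lat n m‖) ^ (-s) := by
        rw [Finset.prod_const, Finset.card_univ, Fintype.card_fin, ← Real.rpow_mul_natCast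
          (by positivity), neg_mul, mul_comm]
    _ ≤ ∏ i, (1 + |(m i : ℝ)|) ^ (-s) := by
        refine Finset.prod_le_prod (fun i _ => by positivity) fun i _ => ?_
        exact Real.rpow_le_rpow_of_nonpos (by positivity)
          (by simpa [lat] using PiLp.norm_apply_le (lat n m) i) (by linarith)

theorem tsum_ofReal_one_add_norm_lat_rpow_ne_top {r : ℝ} (hr : n < r) :
    ∑' m, ENNReal.ofReal ((1 + ‖lat n m‖) ^ (-r)) ≠ ∞ := by
  obtain ⟨s, hs, hsr⟩ : ∃ s : ℝ, 1 < s ∧ n * s ≤ r := by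
    rcases n.eq_zero_or_pos with rfl | hn
    · exact ⟨2, one_lt_two, by simpa using hr.le⟩
    · exact ⟨r / n, (one_lt_div (by positivity)).2 hr, (mul_div_cancel₀ r (by positivity)).le⟩
  set T := ∑' k : ℤ, ENNReal.ofReal ((1 + |(k : ℝ)|) ^ (-s))
  have hT : T ≠ ∞ := (summable_one_add_abs_int_rpow_neg hs).tsum_ofReal_ne_top
  refine ne_top_of_le_ne_top (ENNReal.pow_ne_top hT (n := n)) ?_
  rw [← ENNReal.tsum_pi_fin_prod_eq_pow]
  refine ENNReal.tsum_le_tsum fun m => ?_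
  rw [← ENNReal.ofReal_prod_of_nonneg fun i _ => by positivity]
  refine ENNReal.ofReal_le_ofReal ((Real.rpow_le_rpow_of_exponent_le
    (by simp) (by linarith)).trans (one_add_norm_lat_rpow_le_prod (by linarith) m))

theorem tsum_ofReal_one_add_norm_sub_lat_rpow_le {r : ℝ} (hr : 0 ≤ r)
    (x : EuclideanSpace ℝ (Fin n)) :
    ∑' j, ENNReal.ofReal ((1 + ‖x - lat n j‖) ^ (-r)) ≤
      ENNReal.ofReal ((1 + √n) ^ r) * ∑' m, ENNReal.ofReal ((1 + ‖lat n m‖) ^ (-r)) := by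
  set k : Fin n → ℤ := fun i => round (x i)
  rw [← ENNReal.tsum_mul_left, ← (Equiv.subLeft k).tsum_eq]
  refine ENNReal.tsum_le_tsum fun j => ?_
  rw [← ENNReal.ofReal_mul (by positivity)]
  refine ENNReal.ofReal_le_ofReal ((one_add_norm_rpow_neg_le hr _ (lat n k - x)).trans ?_)
  rw [Equiv.subLeft_apply, lat_sub, sub_add_sub_cancel', sub_sub_cancel]
  gcongr
  exact norm_lat_round_sub_le x

theorem tsum_enorm_comp_sub_lat_le {F : Type*} [ENorm F] {f : EuclideanSpace ℝ (Fin n) → F}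
    {K : ℝ≥0∞} {r : ℝ} (hr : 0 ≤ r) (hf : ∀ x, ‖f x‖ₑ ≤ K * ENNReal.ofReal ((1 + ‖x‖) ^ (-r)))
    (x : EuclideanSpace ℝ (Fin n)) :
    ∑' j, ‖f (x - lat n j)‖ₑ ≤
      K * (ENNReal.ofReal ((1 + √n) ^ r) * ∑' m, ENNReal.ofReal ((1 + ‖lat n m‖) ^ (-r))) := by
  refine (ENNReal.tsum_le_tsum fun j => hf _).trans ?_
  rw [ENNReal.tsum_mul_left]
  gcongr
  exact tsum_ofReal_one_add_norm_sub_lat_rpow_le hr x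

end Lattice

/-- If `L` is measurable with `|L(x)| ≤ C/(1+‖x‖^{n+1})`, then for `1 ≤ p ≤ ∞` and any
`(c_j) ∈ ℓᵖ(ℤⁿ)`, the function `I(x) = Σ_j c_j L(x-j)` is in `Lᵖ(ℝⁿ)` with
`‖I‖_{Lᵖ} ≤ C_p ‖c‖_{ℓᵖ}` for a constant `C_p` independent of `(c_j)`. -/
theorem stmt7 (n : ℕ) (L : EuclideanSpace ℝ (Fin n) → ℂ) (C : ℝ)
    (hLmeas : Measurable L)
    (hLbd : ∀ x : EuclideanSpace ℝ (Fin n), ‖L x‖ ≤ C / (1 + ‖x‖ ^ (n + 1)))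
    (p : ENNReal) (hp : 1 ≤ p) :
    ∃ Cp : ℝ, 0 < Cp ∧
      ∀ (c : (Fin n → ℤ) → ℂ) (hc : Memℓp c p),
        MemLp (fun x : EuclideanSpace ℝ (Fin n) =>
          ∑' j : Fin n → ℤ, c j * L (x - lat n j)) p volume ∧
        eLpNorm (fun x : EuclideanSpace ℝ (Fin n) =>
            ∑' j : Fin n → ℤ, c j * L (x - lat n j)) p volume ≤
          ENNReal.ofReal (Cp * ‖(⟨c, hc⟩ : lp (fun _ : (Fin n → ℤ) => ℂ) p)‖) := by
  set r : ℝ := n + 1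
  set K := ENNReal.ofReal (2 ^ n * C)
  have hL : ∀ x, ‖L x‖ₑ ≤ K * ENNReal.ofReal ((1 + ‖x‖) ^ (-r)) := by
    simpa only [Nat.add_sub_cancel, Nat.cast_add, Nat.cast_one] using
      enorm_le_of_norm_le_div_one_add_norm_pow hLbd
  have hr : (n : ℝ) < r := lt_add_one _
  set A := K * (ENNReal.ofReal ((1 + √n) ^ r) * ∑' m, ENNReal.ofReal ((1 + ‖lat n m‖) ^ (-r)))
  set B := K * ∫⁻ x : EuclideanSpace ℝ (Fin n), ENNReal.ofReal ((1 + ‖x‖) ^ (-r))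
  have hA_top : A ≠ ∞ := ENNReal.mul_ne_top ENNReal.ofReal_ne_top
    (ENNReal.mul_ne_top ENNReal.ofReal_ne_top (tsum_ofReal_one_add_norm_lat_rpow_ne_top hr))
  have hB_top : B ≠ ∞ := ENNReal.mul_ne_top ENNReal.ofReal_ne_top
    (finite_integral_one_add_norm (by simpa using hr)).ne
  have hg : ∀ j, AEStronglyMeasurable (fun x => L (x - lat n j)) volume :=
    fun j => (hLmeas.comp (measurable_sub_const _)).aestronglyMeasurable
  have hA : ∀ x, ∑' j, ‖L (x - lat n j)‖ₑ ≤ A := tsum_enorm_comp_sub_lat_le (by positivity) hL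
  have hB : ∀ j, ∫⁻ x, ‖L (x - lat n j)‖ₑ ≤ B :=
    fun j => lintegral_enorm_comp_sub_le (by fun_prop) hL _
  refine ⟨(schurConst p A B).toReal + 1, by positivity, fun c hc =>
    ⟨memLp_tsum_smul hp hg hA_top hB_top hA hB ⟨c, hc⟩, ?_⟩⟩
  calc _ ≤ schurConst p A B * ENNReal.ofReal ‖(⟨c, hc⟩ : lp (fun _ : (Fin n → ℤ) => ℂ) p)‖ :=
        eLpNorm_tsum_smul_le hp hg hA hB ⟨c, hc⟩
    _ ≤ _ := by
        rw [ENNReal.ofReal_mul (by positivity), ENNReal.ofReal_add (by positivity) zero_le_one,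
          ENNReal.ofReal_toReal (schurConst_ne_top hp hA_top hB_top)]
        gcongr
        exact le_self_add

end
end

section
/- For α ≥ 1, ξ ∈ ℝⁿ with ‖ξ‖ ≤ π (sup-norm coordinates in [-π,π]ⁿ suffices), and j ∈ ℤⁿ∖{0}: e^{α‖ξ‖² - α‖ξ+2πj‖²} ≤ e^{-4π²‖j‖(‖j‖-1)} ≤ e^{-4π²(‖j‖² - ‖j‖)}, and for each fixed j ≠ 0 and ξ ∈ (-π,π)ⁿ, e^{α‖ξ‖² - α‖ξ+2πj‖²} → 0 as α → ∞. Moreover Σ_{j∈ℤⁿ∖{0}} e^{-4π²‖j‖(‖j‖-1)} < ∞. -/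
/-!
Cauchy–Schwarz gives `‖ξ + 2πv‖² - ‖ξ‖² ≥ 2π‖v‖(2π‖v‖ - 2‖ξ‖) ≥ 4π²‖v‖(‖v‖ - 1)` for `‖ξ‖ ≤ π`,
and the factor `α ≥ 1` only helps because this gain is nonnegative once `‖v‖ ≥ 1`. For
`ξ ∈ (-π, π)ⁿ` the gain is positive coordinatewise: `|ξᵢ + 2πjᵢ| ≥ 2π - |ξᵢ| > |ξᵢ|` when `jᵢ ≠ 0`.
Summability follows from `4π²x(x - 1) ≥ 2π²x² - 2π²`: the series is dominated by a Gaussian,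
which factors over the coordinates into one-dimensional theta series.
-/

open Filter Real

noncomputable section

open Finset in
theorem summable_pi_prod_of_nonneg {ι α : Type*} [Fintype ι] {f : ι → α → ℝ}
    (hf0 : ∀ i a, 0 ≤ f i a) (hf : ∀ i, Summable (f i)) :
    Summable fun x : ι → α => ∏ i, f i (x i) := by
  classical
  refine summable_of_sum_le (c := ∏ i, ∑' a, f i a)
    (fun x => prod_nonneg fun i _ => hf0 i _) fun s => ?_
  calc ∑ x ∈ s, ∏ i, f i (x i)
      ≤ ∑ x ∈ Fintype.piFinset fun i => s.image (· i), ∏ i, f i (x i) :=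
        sum_le_sum_of_subset_of_nonneg
          (fun x hx => Fintype.mem_piFinset.2 fun i => mem_image_of_mem _ hx)
          fun x _ _ => prod_nonneg fun i _ => hf0 i _
    _ = ∏ i, ∑ a ∈ s.image (· i), f i a := (prod_univ_sum _ _).symm
    _ ≤ ∏ i, ∑' a, f i a :=
        prod_le_prod (fun i _ => sum_nonneg fun a _ => hf0 i a)
          fun i _ => (hf i).sum_le_tsum _ fun a _ => hf0 i a

theorem summable_exp_neg_mul_int_sq {c : ℝ} (hc : 0 < c) :
    Summable fun k : ℤ => exp (-c * k ^ 2) := by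
  have := summable_pow_mul_jacobiTheta₂_term_bound 0 (div_pos hc pi_pos) 0
  refine this.congr fun k => ?_
  field_simp
  ring_nf

theorem norm_lat_sq (n : ℕ) (j : Fin n → ℤ) : ‖lat n j‖ ^ 2 = ∑ i, (j i : ℝ) ^ 2 := by
  simp [EuclideanSpace.norm_sq_eq, lat]

theorem one_le_norm_lat {n : ℕ} {j : Fin n → ℤ} (hj : j ≠ 0) : 1 ≤ ‖lat n j‖ := by
  obtain ⟨i, hi⟩ := Function.ne_iff.mp hj
  calc (1 : ℝ) ≤ |(j i : ℝ)| := by exact_mod_cast Int.one_le_abs hi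
    _ = ‖lat n j i‖ := by simp [lat]
    _ ≤ ‖lat n j‖ := PiLp.norm_apply_le _ i

theorem summable_exp_neg_mul_norm_lat_sq (n : ℕ) {c : ℝ} (hc : 0 < c) :
    Summable fun j : Fin n → ℤ => exp (-c * ‖lat n j‖ ^ 2) := by
  refine (summable_pi_prod_of_nonneg (fun _ (k : ℤ) => (exp_pos (-c * k ^ 2)).le)
    fun _ => summable_exp_neg_mul_int_sq hc).congr fun j => ?_
  rw [norm_lat_sq, Finset.mul_sum, exp_sum]

theorem mul_sub_le_norm_add_smul_sq_sub_norm_sq {E : Type*} [NormedAddCommGroup E]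
    [InnerProductSpace ℝ E] (ξ v : E) {c : ℝ} (hc : 0 ≤ c) :
    c * ‖v‖ * (c * ‖v‖ - 2 * ‖ξ‖) ≤ ‖ξ + c • v‖ ^ 2 - ‖ξ‖ ^ 2 := by
  rw [norm_add_sq_real, inner_smul_right, norm_smul, Real.norm_of_nonneg hc]
  have := mul_le_mul_of_nonneg_left (neg_le_of_abs_le (abs_real_inner_le_norm ξ v)) hc
  nlinarith

theorem two_pi_sub_abs_le_abs_add_two_pi_mul (x : ℝ) {k : ℤ} (hk : k ≠ 0) :
    2 * π - |x| ≤ |x + 2 * π * k| := by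
  have hk1 : (1 : ℝ) ≤ |(k : ℝ)| := by exact_mod_cast Int.one_le_abs hk
  calc 2 * π - |x| ≤ |2 * π * k| - |x| := by
        rw [abs_mul, abs_of_pos (by positivity : 0 < 2 * π)]
        nlinarith [pi_pos]
    _ ≤ |x + 2 * π * k| := by
      simpa [sub_le_iff_le_add, add_comm] using abs_sub (x + 2 * π * k) x

theorem norm_lt_norm_add_two_pi_smul_lat {n : ℕ} {ξ : EuclideanSpace ℝ (Fin n)}
    (hξ : ∀ i, |ξ i| < π) {j : Fin n → ℤ} (hj : j ≠ 0) : ‖ξ‖ < ‖ξ + (2 * π) • lat n j‖ := by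
  have hcoord (i : Fin n) : (ξ + (2 * π) • lat n j) i = ξ i + 2 * π * j i := by simp [lat]
  have hlt (i : Fin n) (hi : j i ≠ 0) : ‖ξ i‖ < ‖(ξ + (2 * π) • lat n j) i‖ := by
    rw [hcoord, Real.norm_eq_abs, Real.norm_eq_abs]
    linarith [hξ i, two_pi_sub_abs_le_abs_add_two_pi_mul (ξ i) hi]
  obtain ⟨i₀, hi₀⟩ := Function.ne_iff.mp hj
  rw [← sq_lt_sq₀ (norm_nonneg _) (norm_nonneg _), EuclideanSpace.norm_sq_eq,
    EuclideanSpace.norm_sq_eq]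
  refine Finset.sum_lt_sum (fun i _ => ?_) ⟨i₀, Finset.mem_univ _, ?_⟩
  · by_cases hi : j i = 0
    · simp [hcoord, hi]
    · exact pow_le_pow_left₀ (norm_nonneg _) (hlt i hi).le 2
  · exact pow_lt_pow_left₀ (hlt i₀ hi₀) (norm_nonneg _) two_ne_zero

theorem tendsto_exp_mul_sub_mul_atTop {a b : ℝ} (h : a < b) :
    Tendsto (fun α : ℝ => exp (α * a - α * b)) atTop (nhds 0) := by
  simp_rw [← mul_sub]
  exact tendsto_exp_atBot.comp (tendsto_id.atTop_mul_const_of_neg (sub_neg.2 h))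

theorem exp_mul_sq_norm_sub_le {E : Type*} [NormedAddCommGroup E] [InnerProductSpace ℝ E]
    {α : ℝ} (hα : 1 ≤ α) {ξ v : E} (hξ : ‖ξ‖ ≤ π) (hv : 1 ≤ ‖v‖) :
    exp (α * ‖ξ‖ ^ 2 - α * ‖ξ + (2 * π) • v‖ ^ 2) ≤ exp (-(4 * π ^ 2) * ‖v‖ * (‖v‖ - 1)) := by
  set gain := ‖ξ + (2 * π) • v‖ ^ 2 - ‖ξ‖ ^ 2
  have hgain : 4 * π ^ 2 * ‖v‖ * (‖v‖ - 1) ≤ gain := by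
    refine le_trans ?_ (mul_sub_le_norm_add_smul_sq_sub_norm_sq ξ v two_pi_pos.le)
    have := mul_le_mul_of_nonneg_left hξ (by positivity : 0 ≤ 4 * π * ‖v‖)
    linarith
  have hbound : 0 ≤ 4 * π ^ 2 * ‖v‖ * (‖v‖ - 1) := by
    have : 0 ≤ ‖v‖ - 1 := sub_nonneg.2 hv
    positivity
  rw [exp_le_exp]
  calc α * ‖ξ‖ ^ 2 - α * ‖ξ + (2 * π) • v‖ ^ 2 = -(α * gain) := by ring
    _ ≤ -gain := neg_le_neg (le_mul_of_one_le_left (hbound.trans hgain) hα)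
    _ ≤ -(4 * π ^ 2) * ‖v‖ * (‖v‖ - 1) := by linarith

theorem exp_neg_four_pi_sq_mul_mul_sub_one_le (x : ℝ) :
    exp (-(4 * π ^ 2) * x * (x - 1)) ≤ exp (2 * π ^ 2) * exp (-(2 * π ^ 2) * x ^ 2) := by
  rw [← exp_add, exp_le_exp]
  nlinarith [sq_nonneg (x - 1), sq_nonneg π]

theorem stmt12_general (n : ℕ) :
    (∀ α : ℝ, 1 ≤ α → ∀ ξ : EuclideanSpace ℝ (Fin n), ‖ξ‖ ≤ π →
      ∀ j : Fin n → ℤ, j ≠ 0 →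
        Real.exp (α * ‖ξ‖ ^ 2 - α * ‖ξ + (2 * π) • lat n j‖ ^ 2) ≤
          Real.exp (-(4 * π ^ 2) * ‖lat n j‖ * (‖lat n j‖ - 1))) ∧
    (∀ j : Fin n → ℤ, j ≠ 0 →
      Real.exp (-(4 * π ^ 2) * ‖lat n j‖ * (‖lat n j‖ - 1)) ≤
        Real.exp (-(4 * π ^ 2) * (‖lat n j‖ ^ 2 - ‖lat n j‖))) ∧
    (∀ j : Fin n → ℤ, j ≠ 0 → ∀ ξ : EuclideanSpace ℝ (Fin n), (∀ i, |ξ i| < π) →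
      Tendsto (fun α : ℝ =>
          Real.exp (α * ‖ξ‖ ^ 2 - α * ‖ξ + (2 * π) • lat n j‖ ^ 2)) atTop (nhds 0)) ∧
    Summable (fun j : {j : Fin n → ℤ // j ≠ 0} =>
      Real.exp (-(4 * π ^ 2) * ‖lat n (j : Fin n → ℤ)‖ * (‖lat n (j : Fin n → ℤ)‖ - 1))) := by
  refine ⟨fun α hα ξ hξ j hj => exp_mul_sq_norm_sub_le hα hξ (one_le_norm_lat hj),
    fun j _ => le_of_eq (by ring_nf), fun j hj ξ hξ => ?_, ?_⟩
  · exact tendsto_exp_mul_sub_mul_atTop <|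
      pow_lt_pow_left₀ (norm_lt_norm_add_two_pi_smul_lat hξ hj) (norm_nonneg _) two_ne_zero
  · have hgauss := (summable_exp_neg_mul_norm_lat_sq n (by positivity : 0 < 2 * π ^ 2)).mul_left
      (exp (2 * π ^ 2))
    exact (hgauss.of_nonneg_of_le (fun _ => (exp_pos _).le)
      fun j => exp_neg_four_pi_sq_mul_mul_sub_one_le _).comp_injective Subtype.val_injective

/-- Regularity conditions (R1), (R2) for the Gaussian family
`φ̂_α(ξ) = e^{-α‖ξ‖²}`: the quotient `M_{j,α}(ξ) = e^{α‖ξ‖² - α‖ξ+2πj‖²}` satisfies the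
stated bounds, tends to `0` as `α → ∞`, and the dominating sequence is summable. -/
theorem stmt12 (n : ℕ) (hn : 1 ≤ n) :
    (∀ α : ℝ, 1 ≤ α → ∀ ξ : EuclideanSpace ℝ (Fin n), ‖ξ‖ ≤ π →
      ∀ j : Fin n → ℤ, j ≠ 0 →
        Real.exp (α * ‖ξ‖ ^ 2 - α * ‖ξ + (2 * π) • lat n j‖ ^ 2) ≤
          Real.exp (-(4 * π ^ 2) * ‖lat n j‖ * (‖lat n j‖ - 1))) ∧
    (∀ j : Fin n → ℤ, j ≠ 0 →
      Real.exp (-(4 * π ^ 2) * ‖lat n j‖ * (‖lat n j‖ - 1)) ≤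
        Real.exp (-(4 * π ^ 2) * (‖lat n j‖ ^ 2 - ‖lat n j‖))) ∧
    (∀ j : Fin n → ℤ, j ≠ 0 → ∀ ξ : EuclideanSpace ℝ (Fin n), (∀ i, |ξ i| < π) →
      Tendsto (fun α : ℝ =>
          Real.exp (α * ‖ξ‖ ^ 2 - α * ‖ξ + (2 * π) • lat n j‖ ^ 2)) atTop (nhds 0)) ∧
    Summable (fun j : {j : Fin n → ℤ // j ≠ 0} =>
      Real.exp (-(4 * π ^ 2) * ‖lat n (j : Fin n → ℤ)‖ * (‖lat n (j : Fin n → ℤ)‖ - 1))) :=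
  stmt12_general n

end
end
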